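/- arXiv:2406.08808 — 3 statements merged into one kernel-verified Lean document; each statement's English description precedes it below -/
import Mathlib

section
/- Under the Poisson mixture model with mixing distribution Q supported on [0,θ*], for any δ ∈ (0,1) and with ε(n) = log log n / log n, the chi-square divergence between the empirical PMF and the true mixture satisfies χ²(h^obs‖h_Q) ≤ C n^{−1}(log n)^{θ*+4} δ^{−1−ε} with probability at least 1 − δ, for a sufficiently large constant C > 0 (and all sufficiently large n). -/
/-! On the event that every `Xᵢ ≤ K`, with `K ≈ 2 (log n + log (1/δ) + 2θ*)`, the empirical PMF
vanishes beyond `K`, so `χ²(h^obs ‖ h_Q)` is the truncated statistic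
`∑_{x ≤ K} (h^obs(x) - h_Q(x))² / h_Q(x)` plus the tail `∑_{x > K} h_Q(x)`. As `n h^obs(x)` is
binomial, each truncated term has mean at most `1/n`, so by Markov the truncated statistic is below
`2 (K + 1) / (n δ)` outside probability `δ / 2`. The bound `h_Q(x) ≤ e^{2θ*} 2^{-x}` makes the tail
at most `δ / (2n)` and, by a union bound, the probability that some `Xᵢ > K` at most `δ / 2`.
Finally `log (1/δ) ≤ log n · δ^{-ε}`, so the resulting `O((log n + log (1/δ)) / (n δ))` is
`O(n⁻¹ log n · δ^{-1-ε})`. -/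

open MeasureTheory ProbabilityTheory Set

noncomputable section

/-- The Poisson mixture PMF `h_Q(x) = ∫₀^{θ*} e^{-θ} θ^x / x! dQ(θ)`. -/
def poissonMix (Q : Measure ℝ) (x : ℕ) : ℝ :=
  ∫ θ, Real.exp (-θ) * θ ^ x / (Nat.factorial x) ∂Q

/-- `Q` is a mixing distribution: a probability measure supported on `[0, θs]`. -/
def MixingOn (Q : Measure ℝ) (θs : ℝ) : Prop :=
  IsProbabilityMeasure Q ∧ Q (Set.Icc 0 θs)ᶜ = 0

/-- The empirical PMF of the sample `X`. -/
def hObs {n : ℕ} (X : Fin n → ℕ) (x : ℕ) : ℝ :=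
  (∑ i, if X i = x then (1 : ℝ) else 0) / n

/-- Chi-square divergence. -/
def chiSq (p q : ℕ → ℝ) : ℝ := ∑' x, (p x - q x) ^ 2 / q x

/-- `X₁, …, Xₙ` are i.i.d. with common PMF `h` under `P`. -/
def IIDSample {Ω : Type*} [MeasurableSpace Ω] (P : Measure Ω) {n : ℕ}
    (X : Fin n → Ω → ℕ) (h : ℕ → ℝ) : Prop :=
  (∀ i, Measurable (X i)) ∧
  iIndepFun X P ∧
  ∀ i x, P {ω | X i ω = x} = ENNReal.ofReal (h x)

open Real

lemma pow_div_factorial_le_exp_two_mul_div {θ : ℝ} (hθ : 0 ≤ θ) (x : ℕ) :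
    θ ^ x / x.factorial ≤ exp (2 * θ) / 2 ^ x := by
  rw [le_div_iff₀ (by positivity), div_mul_eq_mul_div, mul_comm, ← mul_pow]
  exact pow_div_factorial_le_exp (2 * θ) (by positivity) x

namespace MixingOn

variable {Q : Measure ℝ} {θs : ℝ}

lemma ae_mem_Icc (hQ : MixingOn Q θs) : ∀ᵐ θ ∂Q, θ ∈ Icc 0 θs :=
  mem_ae_iff.mpr hQ.2

lemma poissonMix_nonneg (hQ : MixingOn Q θs) (x : ℕ) : 0 ≤ poissonMix Q x :=
  integral_nonneg_of_ae <| hQ.ae_mem_Icc.mono fun θ hθ => by have := hθ.1; positivity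

lemma poissonMix_le (hQ : MixingOn Q θs) (x : ℕ) : poissonMix Q x ≤ exp (2 * θs) / 2 ^ x := by
  have := hQ.1
  refine (integral_mono_of_nonneg ?_ (integrable_const (exp (2 * θs) / 2 ^ x)) ?_).trans
    (by simp)
  · exact hQ.ae_mem_Icc.mono fun θ hθ => by have := hθ.1; positivity
  filter_upwards [hQ.ae_mem_Icc] with θ ⟨h0, h1⟩
  calc exp (-θ) * θ ^ x / x.factorial ≤ θ ^ x / x.factorial := by
        rw [mul_div_assoc]
        exact mul_le_of_le_one_left (by positivity) (exp_le_one_iff.2 (by linarith))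
    _ ≤ exp (2 * θ) / 2 ^ x := pow_div_factorial_le_exp_two_mul_div h0 x
    _ ≤ exp (2 * θs) / 2 ^ x := by gcongr

lemma summable_poissonMix (hQ : MixingOn Q θs) : Summable (poissonMix Q) := by
  refine .of_nonneg_of_le hQ.poissonMix_nonneg hQ.poissonMix_le ?_
  simpa [div_eq_mul_inv] using summable_geometric_two.mul_left (exp (2 * θs))

lemma tsum_poissonMix_nat_add_le (hQ : MixingOn Q θs) (K : ℕ) :
    ∑' j, poissonMix Q (j + (K + 1)) ≤ exp (2 * θs) / 2 ^ K := by
  have key : ∀ j : ℕ, exp (2 * θs) / 2 ^ (j + (K + 1)) = exp (2 * θs) / 2 ^ K / 2 / 2 ^ j := by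
    intro j; rw [pow_add, pow_succ]; field_simp
  calc ∑' j, poissonMix Q (j + (K + 1)) ≤ ∑' j : ℕ, exp (2 * θs) / 2 ^ K / 2 / 2 ^ j :=
        Summable.tsum_le_tsum (fun j => (hQ.poissonMix_le _).trans_eq (key j))
          ((summable_nat_add_iff _).2 hQ.summable_poissonMix) (summable_geometric_two' _)
    _ = exp (2 * θs) / 2 ^ K := tsum_geometric_two' _

end MixingOn

lemma hObs_eq_zero {n : ℕ} {X : Fin n → ℕ} {x : ℕ} (hx : ∀ i, X i ≠ x) : hObs X x = 0 := by
  simp [hObs, hx]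

lemma chiSq_eq_sum_range_add_tsum {p q : ℕ → ℝ} {K : ℕ} (hp : ∀ x, K < x → p x = 0)
    (hq : Summable q) :
    chiSq p q = ∑ x ∈ Finset.range (K + 1), (p x - q x) ^ 2 / q x + ∑' j, q (j + (K + 1)) := by
  -- `q ^ 2 / q = q` also when `q = 0`
  have tail : ∀ j, (p (j + (K + 1)) - q (j + (K + 1))) ^ 2 / q (j + (K + 1)) = q (j + (K + 1)) :=
    fun j => by rw [hp _ (by omega), zero_sub, neg_sq, sq, mul_self_div_self]
  have hsum : Summable fun x => (p x - q x) ^ 2 / q x := by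
    rw [← summable_nat_add_iff (K + 1)]
    simpa only [tail] using (summable_nat_add_iff (K + 1)).2 hq
  rw [chiSq, ← hsum.sum_add_tsum_nat_add (K + 1)]
  simp only [tail]

lemma integral_sq_sum_div_card_sub_le {Ω ι : Type*} [MeasurableSpace Ω] {P : Measure Ω}
    [IsProbabilityMeasure P] [Fintype ι] [Nonempty ι] {Y : ι → Ω → ℝ}
    (hY : ∀ i, MemLp (Y i) 2 P) (hind : Pairwise fun i j => Y i ⟂ᵢ[P] Y j) {m v : ℝ}
    (hm : ∀ i, P[Y i] = m) (hv : ∀ i, Var[Y i; P] ≤ v) :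
    ∫ ω, ((∑ i, Y i ω) / Fintype.card ι - m) ^ 2 ∂P ≤ v / Fintype.card ι := by
  have hN : (0 : ℝ) < Fintype.card ι := by exact_mod_cast Fintype.card_pos
  have hsum : MemLp (∑ i, Y i) 2 P := memLp_finsetSum' _ fun i _ => hY i
  have hmean : P[fun ω => (∑ i, Y i ω) / Fintype.card ι] = m := by
    rw [integral_div, integral_finsetSum _ fun i _ => (hY i).integrable one_le_two]
    simp only [hm, Finset.sum_const, Finset.card_univ, nsmul_eq_mul]
    field_simp
  calc ∫ ω, ((∑ i, Y i ω) / Fintype.card ι - m) ^ 2 ∂P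
      = Var[fun ω => (∑ i, Y i) ω * (Fintype.card ι : ℝ)⁻¹; P] := by
        rw [variance_eq_integral, ← hmean]
        · simp [div_eq_mul_inv]
        · exact hsum.aemeasurable.mul_const _
    _ = (∑ i, Var[Y i; P]) / (Fintype.card ι) ^ 2 := by
        rw [variance_mul_const, IndepFun.variance_sum (fun i _ => hY i)
          (fun i _ j _ hij => hind hij), inv_pow, div_eq_mul_inv]
    _ ≤ (Fintype.card ι * v) / (Fintype.card ι) ^ 2 := by
        gcongr
        simpa using Finset.sum_le_card_nsmul Finset.univ _ v fun i _ => hv i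
    _ = v / Fintype.card ι := by field_simp

lemma hObs_eq_sum_indicator {Ω : Type*} {n : ℕ} (X : Fin n → Ω → ℕ) (x : ℕ) (ω : Ω) :
    hObs (fun i => X i ω) x = (∑ i, (X i ⁻¹' {x}).indicator (fun _ => (1 : ℝ)) ω) / n := by
  classical
  simp only [hObs, Set.indicator_apply, Set.mem_preimage, Set.mem_singleton_iff]

namespace IIDSample

variable {Ω : Type*} [MeasurableSpace Ω] {P : Measure Ω} {n : ℕ} {X : Fin n → Ω → ℕ}
  {h : ℕ → ℝ}

lemma measure_exists_lt_le (hX : IIDSample P X h) (hh : ∀ x, 0 ≤ h x) (hs : Summable h)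
    (K : ℕ) :
    P {ω | ∃ i, K < X i ω} ≤ n * ENNReal.ofReal (∑' j, h (j + (K + 1))) := by
  have hone : ∀ i, P {ω | K < X i ω} ≤ ENNReal.ofReal (∑' j, h (j + (K + 1))) := fun i => by
    rw [ENNReal.ofReal_tsum_of_nonneg (fun _ => hh _) ((summable_nat_add_iff _).2 hs)]
    calc P {ω | K < X i ω} ≤ P (⋃ j : ℕ, {ω | X i ω = j + (K + 1)}) :=
          measure_mono fun ω (hω : K < X i ω) =>
            Set.mem_iUnion.2 ⟨X i ω - (K + 1), by rw [Set.mem_ofPred_eq]; omega⟩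
      _ ≤ ∑' j : ℕ, P {ω | X i ω = j + (K + 1)} := measure_iUnion_le _
      _ = ∑' j, ENNReal.ofReal (h (j + (K + 1))) := by simp only [hX.2.2]
  calc P {ω | ∃ i, K < X i ω} = P (⋃ i, {ω | K < X i ω}) := by rw [Set.ofPred_exists]
    _ ≤ ∑ i, P {ω | K < X i ω} := measure_iUnion_fintype_le _ _
    _ ≤ ∑ _i : Fin n, ENNReal.ofReal (∑' j, h (j + (K + 1))) := Finset.sum_le_sum fun i _ => hone i
    _ = n * ENNReal.ofReal (∑' j, h (j + (K + 1))) := by simp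

variable [IsProbabilityMeasure P]

lemma integral_sq_hObs_sub_le (hX : IIDSample P X h) (hn : 0 < n) {x : ℕ} (hx : 0 ≤ h x) :
    ∫ ω, (hObs (fun i => X i ω) x - h x) ^ 2 ∂P ≤ h x / n := by
  obtain ⟨hmeas, hind, hlaw⟩ := hX
  have : Nonempty (Fin n) := ⟨⟨0, hn⟩⟩
  set Y : Fin n → Ω → ℝ := fun i => (X i ⁻¹' {x}).indicator fun _ => 1 with hY
  have hs : ∀ i, MeasurableSet (X i ⁻¹' {x}) := fun i => hmeas i (measurableSet_singleton x)
  have hmean : ∀ i, P[Y i] = h x := fun i => by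
    rw [integral_indicator_const _ (hs i), smul_eq_mul, mul_one, measureReal_def]
    exact (congrArg ENNReal.toReal (hlaw i x)).trans (ENNReal.toReal_ofReal hx)
  have hYind : Pairwise fun i j => Y i ⟂ᵢ[P] Y j := fun i j hij => by
    convert (hind.comp (fun _ => ({x} : Set ℕ).indicator fun _ => (1 : ℝ))
      fun _ => measurable_from_nat).indepFun hij using 1 <;>
    ext ω <;> classical simp only [hY, Function.comp_apply, Set.indicator_apply, Set.mem_preimage]
  have hvar : ∀ i, Var[Y i; P] ≤ h x := fun i => by
    have := variance_le_sub_mul_sub (a := 0) (b := 1) (μ := P) (X := Y i)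
      (ae_of_all _ fun ω => by by_cases hω : ω ∈ X i ⁻¹' {x} <;> simp [hY, hω])
      (measurable_const.indicator (hs i)).aemeasurable
    nlinarith [hmean i]
  simpa only [hObs_eq_sum_indicator, Fintype.card_fin] using
    integral_sq_sum_div_card_sub_le
      (fun i => memLp_indicator_const 2 (hs i) 1 (Or.inr (measure_ne_top _ _))) hYind hmean hvar

lemma integrable_sq_hObs_sub (hX : IIDSample P X h) (x : ℕ) (c : ℝ) :
    Integrable (fun ω => (hObs (fun i => X i ω) x - c) ^ 2) P := by
  have hs : ∀ i, MeasurableSet (X i ⁻¹' {x}) := fun i => hX.1 i (measurableSet_singleton x)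
  simp only [hObs_eq_sum_indicator, div_eq_mul_inv]
  exact (((memLp_finsetSum _ fun i _ => memLp_indicator_const 2 (hs i) (1 : ℝ)
    (Or.inr (measure_ne_top _ _))).mul_const _).sub (memLp_const c)).integrable_sq

lemma integral_sum_chiSq_term_le (hX : IIDSample P X h) (hn : 0 < n) (hh : ∀ x, 0 ≤ h x)
    (s : Finset ℕ) :
    ∫ ω, ∑ x ∈ s, (hObs (fun i => X i ω) x - h x) ^ 2 / h x ∂P ≤ s.card / n := by
  rw [integral_finsetSum _ fun x _ => (hX.integrable_sq_hObs_sub x _).div_const _]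
  calc ∑ x ∈ s, ∫ ω, (hObs (fun i => X i ω) x - h x) ^ 2 / h x ∂P ≤ ∑ _x ∈ s, (1 / n : ℝ) := by
        refine Finset.sum_le_sum fun x _ => ?_
        rw [integral_div]
        exact div_le_of_le_mul₀ (hh x) (by positivity)
          ((hX.integral_sq_hObs_sub_le hn (hh x)).trans_eq (by ring))
    _ = s.card / n := by simp [div_eq_mul_inv]

lemma measure_ge_sum_chiSq_term_le (hX : IIDSample P X h) (hn : 0 < n) (hh : ∀ x, 0 ≤ h x)
    (s : Finset ℕ) {t : ℝ} (ht : 0 < t) :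
    P {ω | t ≤ ∑ x ∈ s, (hObs (fun i => X i ω) x - h x) ^ 2 / h x} ≤
      ENNReal.ofReal (s.card / (n * t)) := by
  have markov := mul_meas_ge_le_integral_of_nonneg
    (f := fun ω => ∑ x ∈ s, (hObs (fun i => X i ω) x - h x) ^ 2 / h x)
    (ae_of_all P fun ω => Finset.sum_nonneg fun x _ => div_nonneg (sq_nonneg _) (hh x))
    (integrable_finsetSum _ fun x _ => (hX.integrable_sq_hObs_sub x _).div_const _) t
  rw [← ofReal_measureReal]
  refine ENNReal.ofReal_le_ofReal ?_
  rw [← div_div, le_div_iff₀ ht, mul_comm]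
  exact markov.trans (hX.integral_sum_chiSq_term_le hn hh s)

lemma measure_lt_chiSq_le (hX : IIDSample P X h) (hn : 0 < n) (hh : ∀ x, 0 ≤ h x)
    (hs : Summable h) (K : ℕ) {δ : ℝ} (hδ : 0 < δ) (htail : ∑' j, h (j + (K + 1)) ≤ δ / (2 * n)) :
    P {ω | 2 * (K + 1) / (n * δ) + δ / (2 * n) < chiSq (hObs fun i => X i ω) h} ≤
      ENNReal.ofReal δ := by
  set S : Ω → ℝ := fun ω => ∑ x ∈ Finset.range (K + 1), (hObs (fun i => X i ω) x - h x) ^ 2 / h x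
  have hsub : {ω | 2 * (K + 1) / (n * δ) + δ / (2 * n) < chiSq (hObs fun i => X i ω) h} ⊆
      {ω | ∃ i, K < X i ω} ∪ {ω | 2 * (K + 1) / (n * δ) ≤ S ω} := fun ω hω => by
    by_contra hgood
    simp only [Set.mem_union, Set.mem_ofPred_eq, not_or, not_exists, not_lt, not_le] at hgood hω
    rw [chiSq_eq_sum_range_add_tsum
      (fun x (hx : K < x) => hObs_eq_zero fun i hi => by linarith [hgood.1 i]) hs] at hω
    linarith [hgood.2]
  have hn' : (0 : ℝ) < n := by exact_mod_cast hn
  calc _ ≤ _ := measure_mono hsub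
    _ ≤ P {ω | ∃ i, K < X i ω} + P {ω | 2 * (K + 1) / (n * δ) ≤ S ω} := measure_union_le _ _
    _ ≤ n * ENNReal.ofReal (δ / (2 * n)) +
          ENNReal.ofReal ((K + 1) / (n * (2 * (K + 1) / (n * δ)))) := by
        gcongr
        · exact (hX.measure_exists_lt_le hh hs K).trans (by gcongr)
        · simpa using hX.measure_ge_sum_chiSq_term_le hn hh (Finset.range (K + 1))
            (t := 2 * (K + 1) / (n * δ)) (by positivity)
    _ = ENNReal.ofReal δ := by
        rw [← ENNReal.ofReal_natCast, ← ENNReal.ofReal_mul hn'.le,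
          ← ENNReal.ofReal_add (by positivity) (by positivity)]
        congr 1
        field_simp
        ring

end IIDSample

lemma le_rpow_one_add_div {G L : ℝ} (hG : exp 1 ≤ G) (hL : 0 ≤ L) : L ≤ G ^ (1 + L / G) := by
  have hG0 : 0 < G := (exp_pos 1).trans_le hG
  have hlog : 1 ≤ log G := by rwa [le_log_iff_exp_le hG0]
  have hLG : 0 ≤ L / G := div_nonneg hL hG0.le
  calc L = G * (L / G) := by field_simp
    _ ≤ G * exp (log G * (L / G)) := by
        gcongr
        nlinarith [add_one_le_exp (log G * (L / G))]
    _ = G ^ (1 + L / G) := by rw [rpow_add hG0, rpow_one, rpow_def_of_pos hG0]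

lemma rpow_neg_one_sub_log_div {δ G : ℝ} (hδ : 0 < δ) (hG : 0 < G) :
    δ ^ (-1 - log G / G) = δ⁻¹ * G ^ (-log δ / G) := by
  rw [rpow_def_of_pos hδ, rpow_def_of_pos hG, ← exp_log (inv_pos.2 hδ), log_inv, ← exp_add]
  ring_nf

lemma exp_div_two_pow_le {θ n δ : ℝ} (hn : 0 < n) (hδ : 0 < δ) {K : ℕ}
    (hK : 2 * (log n - log δ + 2 * θ + 1) ≤ K) (ha : 0 ≤ log n - log δ + 2 * θ) :
    exp (2 * θ) / 2 ^ K ≤ δ / (2 * n) := by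
  have hlog2 := log_two_gt_d9
  have hlog2' := log_two_lt_d9
  have h2K : (2 : ℝ) ^ K = exp (K * log 2) := by rw [exp_nat_mul, exp_log two_pos]
  calc exp (2 * θ) / 2 ^ K = exp (2 * θ - K * log 2) := by rw [h2K, exp_sub]
    _ ≤ exp (log δ - log n - log 2) := exp_le_exp.2 (by nlinarith)
    _ = δ / (2 * n) := by rw [exp_sub, exp_sub, exp_log hδ, exp_log hn, exp_log two_pos]; ring

lemma threshold_le_rate {θ n δ : ℝ} (hθ : 0 ≤ θ) (hn : exp (exp 1) ≤ n) (hδ : δ ∈ Ioo 0 1) {K : ℕ}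
    (hK : K ≤ 2 * (log n - log δ + 2 * θ + 1) + 1) :
    2 * (K + 1) / (n * δ) + δ / (2 * n) ≤
      (8 * θ + 17) * n⁻¹ * log n ^ (θ + 4) * δ ^ (-1 - log (log n) / log n) := by
  obtain ⟨hδ0, hδ1⟩ := hδ
  have hn0 : 0 < n := (exp_pos _).trans_le hn
  have hGe : exp 1 ≤ log n := by rwa [le_log_iff_exp_le hn0]
  have hG1 : 1 ≤ log n := (one_le_exp zero_le_one).trans hGe
  rw [rpow_neg_one_sub_log_div hδ0 (by linarith)]
  set G := log n
  set L := -log δ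
  have hL : 0 ≤ L := neg_nonneg.2 (log_nonpos hδ0.le hδ1.le)
  have hE : 1 ≤ G ^ (L / G) := one_le_rpow hG1 (div_nonneg hL (by linarith))
  have hGE : G ≤ G * G ^ (L / G) := le_mul_of_one_le_right (by linarith) hE
  have hLE : L ≤ G * G ^ (L / G) := by
    simpa [rpow_add (by linarith : 0 < G)] using le_rpow_one_add_div hGe hL
  have hGpow : G ≤ G ^ (θ + 4) := by
    simpa using rpow_le_rpow_of_exponent_le hG1 (show (1 : ℝ) ≤ θ + 4 by linarith)
  have hsmall : δ / (2 * n) ≤ 1 / (n * δ) := by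
    rw [div_le_div_iff₀ (by positivity) (by positivity)]
    nlinarith [mul_lt_mul_of_pos_left (mul_lt_one_of_nonneg_of_lt_one_left hδ0.le hδ1 hδ1.le) hn0]
  calc 2 * (K + 1) / (n * δ) + δ / (2 * n)
      ≤ (4 * G + 4 * L + 8 * θ + 8) / (n * δ) + 1 / (n * δ) := by
        gcongr
        linarith
    _ = (4 * G + 4 * L + 8 * θ + 9) / (n * δ) := by ring
    _ ≤ (8 * θ + 17) * (G * G ^ (L / G)) / (n * δ) := by
        gcongr
        nlinarith
    _ ≤ (8 * θ + 17) * (G ^ (θ + 4) * G ^ (L / G)) / (n * δ) := by gcongr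
    _ = _ := by field_simp

lemma ofReal_one_sub_le_measure {Ω : Type*} [MeasurableSpace Ω] {P : Measure Ω}
    [IsProbabilityMeasure P] {s : Set Ω} {δ : ℝ} (hδ : 0 ≤ δ) (hs : P sᶜ ≤ ENNReal.ofReal δ) :
    ENNReal.ofReal (1 - δ) ≤ P s := by
  rw [ENNReal.ofReal_sub _ hδ, ENNReal.ofReal_one, tsub_le_iff_right]
  calc 1 = P univ := measure_univ.symm
    _ ≤ P s + P sᶜ := measure_univ_le_add_compl s
    _ ≤ P s + ENNReal.ofReal δ := by gcongr

/-- high-probability chi-square bound between the empirical PMF and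
the Poisson mixture PMF: with probability at least `1 - δ`,
`χ²(h^obs ‖ h_Q) ≤ C n^{-1} (log n)^{θ*+4} δ^{-1-ε}` with `ε = log log n / log n`. -/
theorem stmt6 (θs : ℝ) (hθ : 0 < θs) :
    ∃ C > (0:ℝ), ∃ N : ℕ, ∀ n : ℕ, N ≤ n →
    ∀ δ ∈ Set.Ioo (0:ℝ) 1,
    ∀ Q : Measure ℝ, MixingOn Q θs →
    ∀ (Ω : Type) (_ : MeasurableSpace Ω) (P : Measure Ω), IsProbabilityMeasure P →
    ∀ X : Fin n → Ω → ℕ, IIDSample P X (poissonMix Q) →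
    ENNReal.ofReal (1 - δ) ≤
      P {ω | chiSq (hObs (fun i => X i ω)) (poissonMix Q) ≤
        C * (n : ℝ)⁻¹ * Real.log n ^ (θs + 4) *
          δ ^ (-1 - Real.log (Real.log n) / Real.log n)} := by
  refine ⟨8 * θs + 17, by positivity, ⌈exp (exp 1)⌉₊, fun n hN δ hδ Q hQ Ω _ P _ X hX => ?_⟩
  have hn : exp (exp 1) ≤ n := Nat.ceil_le.1 hN
  have hn0 : 0 < n := by exact_mod_cast (exp_pos _).trans_le hn
  have hlog : 0 ≤ log n - log δ + 2 * θs := by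
    have := log_nonpos hδ.1.le hδ.2.le
    have := log_nonneg (one_le_exp (exp_pos 1).le |>.trans hn)
    linarith
  set K := ⌈2 * (log n - log δ + 2 * θs + 1)⌉₊
  have htail : ∑' j, poissonMix Q (j + (K + 1)) ≤ δ / (2 * n) :=
    (hQ.tsum_poissonMix_nat_add_le K).trans
      (exp_div_two_pow_le (by positivity) hδ.1 (Nat.le_ceil _) hlog)
  refine ofReal_one_sub_le_measure hδ.1.le <| (measure_mono fun ω hω => ?_).trans
    (hX.measure_lt_chiSq_le hn0 hQ.poissonMix_nonneg hQ.summable_poissonMix K hδ.1 htail)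
  refine (threshold_le_rate hθ.le hn hδ ?_).trans_lt (not_le.1 hω)
  linarith [Nat.ceil_lt_add_one (show 0 ≤ 2 * (log n - log δ + 2 * θs + 1) by linarith)]
end
end

section
/- Assume the generalized distance d satisfies γ₁H²(p,q) ≤ d(p‖q) ≤ γ₂KL(p‖q), and let Q̂_d be a minimum-distance estimator, so d(h^obs‖h_{Q̂_d}) ≤ d(h^obs‖h_Q). Then for any real coefficients b₀,…,b_{2k}, |Σ_{x=0}^{2k} b_x[h^obs(x) − h_{Q̂_d}(x)]| + |Σ_{x=0}^{2k} b_x[h^obs(x) − h_Q(x)]| ≤ C k^{1/2} (max_{0≤x≤2k}|b_x|) √(KL(h^obs‖h_Q)), where C = C(γ₁, γ₂) > 0 depends only on γ₁ and γ₂. -/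
/-!
The minimum-distance property and the sandwich give
`γ₁ H²(h^obs, h_{Q̂}) ≤ d(h^obs‖h_{Q̂}) ≤ d(h^obs‖h_Q) ≤ γ₂ KL(h^obs‖h_Q)`, and likewise
`γ₁ H²(h^obs, h_Q) ≤ γ₂ KL(h^obs‖h_Q)`. Each of the two sums is at most `max |b_x|` times an
`ℓ¹` distance, and `‖p - q‖₁ ≤ 2 √(2 H²(p, q))` by Cauchy–Schwarz applied to
`|p - q| = |√p - √q| (√p + √q)`.
-/

open MeasureTheory

noncomputable section

/-- `p` is a probability mass function on `ℕ`. -/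
def IsPMFOn (p : ℕ → ℝ) : Prop := (∀ x, 0 ≤ p x) ∧ HasSum p 1

/-- Squared Hellinger distance. -/
def H2 (p q : ℕ → ℝ) : ℝ := (1/2) * ∑' x, (Real.sqrt (p x) - Real.sqrt (q x)) ^ 2

/-- Kullback-Leibler divergence. -/
def KLdiv (p q : ℕ → ℝ) : ℝ := ∑' x, p x * Real.log (p x / q x)

lemma sq_sqrt_sub_sqrt_le {a b : ℝ} (ha : 0 ≤ a) (hb : 0 ≤ b) : (√a - √b) ^ 2 ≤ a + b := by
  nlinarith [Real.sq_sqrt ha, Real.sq_sqrt hb, mul_nonneg (Real.sqrt_nonneg a) (Real.sqrt_nonneg b)]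

lemma sq_sqrt_add_sqrt_le {a b : ℝ} (ha : 0 ≤ a) (hb : 0 ≤ b) :
    (√a + √b) ^ 2 ≤ 2 * (a + b) := by
  simpa only [Real.sq_sqrt ha, Real.sq_sqrt hb] using add_sq_le (a := √a) (b := √b)

namespace IsPMFOn

variable {p q : ℕ → ℝ}

lemma sum_le_one (hp : IsPMFOn p) (s : Finset ℕ) : ∑ x ∈ s, p x ≤ 1 :=
  sum_le_hasSum s (fun x _ => hp.1 x) hp.2

lemma sum_sq_sqrt_sub_sqrt_le_two_mul_H2 (hp : IsPMFOn p) (hq : IsPMFOn q) (s : Finset ℕ) :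
    ∑ x ∈ s, (√(p x) - √(q x)) ^ 2 ≤ 2 * H2 p q := by
  have hsummable : Summable fun x => (√(p x) - √(q x)) ^ 2 :=
    .of_nonneg_of_le (fun _ => sq_nonneg _) (fun x => sq_sqrt_sub_sqrt_le (hp.1 x) (hq.1 x))
      (hp.2.summable.add hq.2.summable)
  rw [H2, ← mul_assoc, mul_one_div_cancel two_ne_zero, one_mul]
  exact hsummable.sum_le_tsum s fun _ _ => sq_nonneg _

lemma sum_sq_sqrt_add_sqrt_le_four (hp : IsPMFOn p) (hq : IsPMFOn q) (s : Finset ℕ) :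
    ∑ x ∈ s, (√(p x) + √(q x)) ^ 2 ≤ 4 :=
  calc ∑ x ∈ s, (√(p x) + √(q x)) ^ 2 ≤ ∑ x ∈ s, 2 * (p x + q x) :=
        Finset.sum_le_sum fun x _ => sq_sqrt_add_sqrt_le (hp.1 x) (hq.1 x)
    _ = 2 * (∑ x ∈ s, p x + ∑ x ∈ s, q x) := by
        rw [← Finset.mul_sum, Finset.sum_add_distrib]
    _ ≤ 4 := by linarith [hp.sum_le_one s, hq.sum_le_one s]

lemma sum_abs_sub_le_two_mul_sqrt_H2 (hp : IsPMFOn p) (hq : IsPMFOn q) (s : Finset ℕ) :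
    ∑ x ∈ s, |p x - q x| ≤ 2 * √(2 * H2 p q) := by
  have hfactor : ∀ x, |p x - q x| = |√(p x) - √(q x)| * (√(p x) + √(q x)) := fun x => by
    rw [← abs_of_nonneg (by positivity : 0 ≤ √(p x) + √(q x)), ← abs_mul, mul_comm, ← sq_sub_sq,
      Real.sq_sqrt (hp.1 x), Real.sq_sqrt (hq.1 x)]
  calc ∑ x ∈ s, |p x - q x|
      = ∑ x ∈ s, |√(p x) - √(q x)| * (√(p x) + √(q x)) := Finset.sum_congr rfl fun x _ => hfactor x
    _ ≤ √(∑ x ∈ s, |√(p x) - √(q x)| ^ 2) * √(∑ x ∈ s, (√(p x) + √(q x)) ^ 2) :=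
        Real.sum_mul_le_sqrt_mul_sqrt _ _ _
    _ ≤ √(2 * H2 p q) * √4 := by
        simp only [sq_abs]
        gcongr
        · exact sum_sq_sqrt_sub_sqrt_le_two_mul_H2 hp hq s
        · exact sum_sq_sqrt_add_sqrt_le_four hp hq s
    _ = 2 * √(2 * H2 p q) := by
        rw [show (4 : ℝ) = 2 ^ 2 by norm_num, Real.sqrt_sq zero_le_two, mul_comm]

lemma abs_sum_mul_sub_le (hp : IsPMFOn p) (hq : IsPMFOn q) {s : Finset ℕ} (hs : s.Nonempty)
    (b : ℕ → ℝ) :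
    |∑ x ∈ s, b x * (p x - q x)| ≤ s.sup' hs (fun x => |b x|) * (2 * √(2 * H2 p q)) := by
  set M := s.sup' hs fun x => |b x|
  have hbM : ∀ x ∈ s, |b x| ≤ M := fun x hx => s.le_sup' (fun x => |b x|) hx
  have hM : 0 ≤ M := s.le_sup'_of_le _ hs.choose_spec (abs_nonneg _)
  calc |∑ x ∈ s, b x * (p x - q x)| ≤ ∑ x ∈ s, |b x| * |p x - q x| := by
        simpa only [abs_mul] using Finset.abs_sum_le_sum_abs (fun x => b x * (p x - q x)) s
    _ ≤ ∑ x ∈ s, M * |p x - q x| :=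
        Finset.sum_le_sum fun x hx => mul_le_mul_of_nonneg_right (hbM x hx) (abs_nonneg _)
    _ ≤ M * (2 * √(2 * H2 p q)) := by
        rw [← Finset.mul_sum]
        exact mul_le_mul_of_nonneg_left (sum_abs_sub_le_two_mul_sqrt_H2 hp hq s) hM

lemma abs_sum_mul_sub_le_of_H2_le (hp : IsPMFOn p) (hq : IsPMFOn q) {s : Finset ℕ}
    (hs : s.Nonempty) (b : ℕ → ℝ) {c K : ℝ} (hc : 0 ≤ c) (hH2 : H2 p q ≤ c * K) :
    |∑ x ∈ s, b x * (p x - q x)| ≤ 2 * √(2 * c) * s.sup' hs (fun x => |b x|) * √K := by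
  have hM : 0 ≤ s.sup' hs fun x => |b x| := s.le_sup'_of_le _ hs.choose_spec (abs_nonneg _)
  calc |∑ x ∈ s, b x * (p x - q x)| ≤ s.sup' hs (fun x => |b x|) * (2 * √(2 * H2 p q)) :=
        abs_sum_mul_sub_le hp hq hs b
    _ ≤ s.sup' hs (fun x => |b x|) * (2 * √(2 * (c * K))) := by gcongr
    _ = 2 * √(2 * c) * s.sup' hs (fun x => |b x|) * √K := by
        rw [← mul_assoc 2 c K, Real.sqrt_mul (by positivity : (0 : ℝ) ≤ 2 * c)]
        ring

end IsPMFOn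

/-- `pobs`, `pQ` and `pHat` stand for `h^obs`, `h_Q` and `h_{Q̂_d}`. -/
theorem stmt10 (γ1 γ2 : ℝ) (hγ1 : 0 < γ1) (hγ2 : 0 < γ2) :
    ∃ C > (0:ℝ),
    ∀ d : (ℕ → ℝ) → (ℕ → ℝ) → ℝ,
      (∀ p q, IsPMFOn p → IsPMFOn q → 0 ≤ d p q ∧ (d p q = 0 ↔ p = q)) →
      (∀ p q, IsPMFOn p → IsPMFOn q → γ1 * H2 p q ≤ d p q ∧ d p q ≤ γ2 * KLdiv p q) →
    ∀ pobs pQ pHat : ℕ → ℝ, IsPMFOn pobs → IsPMFOn pQ → IsPMFOn pHat →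
      d pobs pHat ≤ d pobs pQ →
    ∀ k : ℕ, 1 ≤ k → ∀ b : ℕ → ℝ,
      |∑ x ∈ Finset.range (2 * k + 1), b x * (pobs x - pHat x)| +
        |∑ x ∈ Finset.range (2 * k + 1), b x * (pobs x - pQ x)| ≤
      C * Real.sqrt k *
        ((Finset.range (2 * k + 1)).sup' (Finset.nonempty_range_iff.mpr (Nat.succ_ne_zero _))
          fun x => |b x|) *
        Real.sqrt (KLdiv pobs pQ) := by
  refine ⟨4 * √(2 * (γ2 / γ1)), by positivity, ?_⟩
  intro d _ hsandwich pobs pQ pHat hpobs hpQ hpHat hmin k hk b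
  have hs : (Finset.range (2 * k + 1)).Nonempty :=
    Finset.nonempty_range_iff.mpr (Nat.succ_ne_zero _)
  set M := (Finset.range (2 * k + 1)).sup' hs fun x => |b x|
  set KL := KLdiv pobs pQ
  have hdKL : d pobs pQ ≤ γ2 * KL := (hsandwich pobs pQ hpobs hpQ).2
  have hH2 : ∀ q, IsPMFOn q → d pobs q ≤ d pobs pQ → H2 pobs q ≤ γ2 / γ1 * KL := fun q hq hle => by
    rw [div_mul_eq_mul_div, le_div_iff₀ hγ1, mul_comm]
    linarith [(hsandwich pobs q hpobs hq).1]
  have hterm : ∀ q, IsPMFOn q → d pobs q ≤ d pobs pQ →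
      |∑ x ∈ Finset.range (2 * k + 1), b x * (pobs x - q x)| ≤ 2 * √(2 * (γ2 / γ1)) * M * √KL :=
    fun q hq hle => hpobs.abs_sum_mul_sub_le_of_H2_le hq hs b (by positivity) (hH2 q hq hle)
  have hM : 0 ≤ M := Finset.le_sup'_of_le _ hs.choose_spec (abs_nonneg _)
  have hk1 : (1 : ℝ) ≤ √k := Real.one_le_sqrt.mpr (by exact_mod_cast hk)
  calc _ ≤ 4 * √(2 * (γ2 / γ1)) * M * √KL := by
        linarith [hterm pHat hpHat hmin, hterm pQ hpQ le_rfl]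
    _ ≤ 4 * √(2 * (γ2 / γ1)) * M * √KL * √k := le_mul_of_one_le_right (by positivity) hk1
    _ = 4 * √(2 * (γ2 / γ1)) * √k * M * √KL := by ring
end
end

section
/- Let h^obs be the empirical PMF of n i.i.d. samples from a PMF h_Q on ℤ≥0 with h_Q(x) > 0 for all x in the support, and let A > 1 and k > 0. Then the probability that there exists some x ≥ 0 with h^obs(x) > k h_Q(x) A^x is at most 1/(k(1 − A^{−1})). -/
/-! Each `ofReal (hObs · x)` has expectation `h x`, so Markov's inequality bounds the probability
that `hObs x` exceeds `k * h x * A ^ x` by `(k * A ^ x)⁻¹` (when `h x = 0` the event is null,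
since almost surely no sample equals `x`). A union bound over `x` and the geometric series
`∑ A⁻¹ ^ x = 1 / (1 - A⁻¹)` finish the proof. -/

open MeasureTheory ProbabilityTheory Set

noncomputable section

open scoped ENNReal

section EmpiricalPMF

variable {n : ℕ}

lemma hObs_eq_zero_of_forall_ne {X : Fin n → ℕ} {x : ℕ} (hX : ∀ i, X i ≠ x) :
    hObs X x = 0 := by
  simp [hObs, hX]

variable {Ω : Type*} {X : Fin n → Ω → ℕ}

lemma ofReal_hObs_eq_sum_indicator (hn : 0 < n) (x : ℕ) (ω : Ω) :
    ENNReal.ofReal (hObs (fun i => X i ω) x) =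
      ∑ i, {ω | X i ω = x}.indicator (fun _ => (n : ℝ≥0∞)⁻¹) ω := by
  rw [hObs, Finset.sum_div, ENNReal.ofReal_sum_of_nonneg fun i _ => by positivity]
  refine Finset.sum_congr rfl fun i _ => ?_
  by_cases hi : X i ω = x
  · simp [hi, ENNReal.ofReal_inv_of_pos (Nat.cast_pos.mpr hn)]
  · simp [hi]

variable [MeasurableSpace Ω]

lemma measurable_hObs (hX : ∀ i, Measurable (X i)) (x : ℕ) :
    Measurable fun ω => hObs (fun i => X i ω) x :=
  (Finset.measurable_sum _ fun i _ =>
    Measurable.ite (hX i (measurableSet_singleton x)) measurable_const measurable_const).div_const _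

lemma lintegral_ofReal_hObs {P : Measure Ω} (hX : ∀ i, Measurable (X i)) (hn : 0 < n)
    {x : ℕ} {p : ℝ≥0∞} (hp : ∀ i, P {ω | X i ω = x} = p) :
    ∫⁻ ω, ENNReal.ofReal (hObs (fun i => X i ω) x) ∂P = p := by
  have hmeas : ∀ i, MeasurableSet {ω | X i ω = x} := fun i => hX i (measurableSet_singleton x)
  simp_rw [ofReal_hObs_eq_sum_indicator hn]
  rw [lintegral_finsetSum _ fun i _ => measurable_const.indicator (hmeas i)]
  simp_rw [lintegral_indicator_const (hmeas _), hp, Finset.sum_const, Finset.card_univ,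
    Fintype.card_fin, nsmul_eq_mul, ← mul_assoc]
  rw [ENNReal.mul_inv_cancel (by exact_mod_cast hn.ne') (ENNReal.natCast_ne_top n), one_mul]

lemma measure_hObs_pos_eq_zero {P : Measure Ω} {x : ℕ} (hp : ∀ i, P {ω | X i ω = x} = 0) :
    P {ω | 0 < hObs (fun i => X i ω) x} = 0 := by
  refine measure_mono_null (fun ω hω => ?_) (measure_iUnion_null hp)
  by_contra hω'
  simp only [mem_iUnion, mem_ofPred_eq, not_exists] at hω'
  exact hω.ne' (hObs_eq_zero_of_forall_ne hω')

lemma measure_hObs_gt_le {P : Measure Ω} (hX : ∀ i, Measurable (X i)) (hn : 0 < n)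
    {x : ℕ} {q : ℝ} (hq : 0 ≤ q) (hp : ∀ i, P {ω | X i ω = x} = ENNReal.ofReal q)
    {c : ℝ} (hc : 0 < c) :
    P {ω | c * q < hObs (fun i => X i ω) x} ≤ ENNReal.ofReal c⁻¹ := by
  rcases hq.eq_or_lt with rfl | hq
  · simp only [ENNReal.ofReal_zero, mul_zero] at hp ⊢
    exact (measure_hObs_pos_eq_zero hp).le.trans zero_le
  have hcq : 0 < c * q := mul_pos hc hq
  calc P {ω | c * q < hObs (fun i => X i ω) x}
      ≤ P {ω | ENNReal.ofReal (c * q) ≤ ENNReal.ofReal (hObs (fun i => X i ω) x)} :=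
        measure_mono fun ω hω => ENNReal.ofReal_le_ofReal (le_of_lt hω)
    _ ≤ (∫⁻ ω, ENNReal.ofReal (hObs (fun i => X i ω) x) ∂P) / ENNReal.ofReal (c * q) :=
        meas_ge_le_lintegral_div (measurable_hObs hX x).ennreal_ofReal.aemeasurable
          (ENNReal.ofReal_pos.mpr hcq).ne' ENNReal.ofReal_ne_top
    _ = ENNReal.ofReal (q / (c * q)) := by
        rw [lintegral_ofReal_hObs hX hn hp, ENNReal.ofReal_div_of_pos hcq]
    _ = ENNReal.ofReal c⁻¹ := by
        rw [div_mul_cancel_right₀ hq.ne']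

end EmpiricalPMF

lemma tsum_ofReal_inv_mul_pow {A : ℝ} (hA : 1 < A) {k : ℝ} (hk : 0 < k) :
    ∑' x : ℕ, ENNReal.ofReal (k * A ^ x)⁻¹ = ENNReal.ofReal (1 / (k * (1 - A⁻¹))) := by
  have hA₀ : 0 ≤ A⁻¹ := inv_nonneg.mpr (zero_le_one.trans hA.le)
  have hA₁ : A⁻¹ < 1 := inv_lt_one_of_one_lt₀ hA
  have hterm : ∀ x : ℕ, (k * A ^ x)⁻¹ = k⁻¹ * A⁻¹ ^ x := fun x => by rw [mul_inv, inv_pow]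
  simp_rw [hterm]
  rw [← ENNReal.ofReal_tsum_of_nonneg (fun x => by positivity)
      ((summable_geometric_of_lt_one hA₀ hA₁).mul_left _),
    tsum_mul_left, tsum_geometric_of_lt_one hA₀ hA₁, one_div, mul_inv]

/-- union/Markov bound: the probability that `h^obs(x) > k h(x) A^x`
for some `x` is at most `1/(k(1 - A⁻¹))`. -/
theorem stmt11 (h : ℕ → ℝ) (hpos : ∀ x, 0 ≤ h x)
    (A k : ℝ) (hA : 1 < A) (hk : 0 < k) (n : ℕ) (hn : 1 ≤ n)
    (Ω : Type) (_ : MeasurableSpace Ω) (P : Measure Ω)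
    (X : Fin n → Ω → ℕ) (hX : IIDSample P X h) :
    P {ω | ∃ x : ℕ, hObs (fun i => X i ω) x > k * h x * A ^ x} ≤
      ENNReal.ofReal (1 / (k * (1 - A⁻¹))) := by
  obtain ⟨hXm, -, hXdist⟩ := hX
  have hbound : ∀ x : ℕ, P {ω | hObs (fun i => X i ω) x > k * h x * A ^ x}
      ≤ ENNReal.ofReal (k * A ^ x)⁻¹ := fun x => by
    rw [show k * h x * A ^ x = k * A ^ x * h x by ring]
    exact measure_hObs_gt_le hXm hn (hpos x) (hXdist · x) (by positivity)
  calc P {ω | ∃ x : ℕ, hObs (fun i => X i ω) x > k * h x * A ^ x}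
      ≤ ∑' x : ℕ, P {ω | hObs (fun i => X i ω) x > k * h x * A ^ x} := by
        rw [ofPred_exists]
        exact measure_iUnion_le _
    _ ≤ ∑' x : ℕ, ENNReal.ofReal (k * A ^ x)⁻¹ := ENNReal.tsum_le_tsum hbound
    _ = ENNReal.ofReal (1 / (k * (1 - A⁻¹))) := tsum_ofReal_inv_mul_pow hA hk
end
end
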